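/- For every integer n ≥ 1, real r ∈ (1,∞), and f ∈ L^r(ℝ^n) (real-valued), if ∫_{ℝ^n} f · (ψ - Δψ) dx = 0 for all compactly supported smooth functions ψ on ℝ^n (where Δ is the Laplacian), then f = 0 almost everywhere. -/

import Mathlib

/-!
Mollify: for a test function `ρ`, the convolution `u = f ⋆ ρ` is smooth, bounded by Hölder's
inequality, and the hypothesis applied to `ψ = ρ (x - ·)` says exactly that `u = Δu`. A bounded
`C²` function with `u ≤ Δu` is nonpositive: at a maximum point of `u - ε ‖·‖²` the Laplacian is
`≤ 0`, which forces `u ≤ ε (‖·‖² + 2 dim)`, and `ε → 0`. Applied to `±u` this gives `f ⋆ ρ = 0`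
for every test function `ρ`, hence `f = 0` almost everywhere.
-/

open MeasureTheory

/-- The Euclidean Laplacian of `ψ : ℝⁿ → ℝ`, `Δψ = ∑ i ∂²ψ/∂x_i²`. -/
noncomputable def euclideanLaplacian {n : ℕ} (ψ : EuclideanSpace ℝ (Fin n) → ℝ)
    (x : EuclideanSpace ℝ (Fin n)) : ℝ :=
  ∑ i : Fin n, iteratedFDeriv ℝ 2 ψ x
    ![EuclideanSpace.single i (1 : ℝ), EuclideanSpace.single i (1 : ℝ)]

open Filter InnerProductSpace Laplacian
open scoped ContDiff Convolution RealInnerProductSpace Topology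

theorem euclideanLaplacian_eq_laplacian {n : ℕ} (ψ : EuclideanSpace ℝ (Fin n) → ℝ) :
    euclideanLaplacian ψ = Δ ψ := by
  rw [laplacian_eq_iteratedFDeriv_orthonormalBasis ψ (EuclideanSpace.basisFun (Fin n) ℝ)]
  ext x
  simp [euclideanLaplacian]

theorem iteratedDeriv_two_nonpos_of_isLocalMax {g : ℝ → ℝ} {a : ℝ} (hg : ContDiff ℝ 2 g)
    (hmax : IsLocalMax g a) : iteratedDeriv 2 g a ≤ 0 := by
  -- otherwise `g` is strictly convex near `a`, and `a` is the midpoint of two points near it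
  by_contra! hpos
  obtain ⟨δ, hδ, hball⟩ := Metric.eventually_nhds_iff_ball.mp <| hmax.and <|
    (hg.continuous_iteratedDeriv 2 le_rfl).continuousAt.eventually (lt_mem_nhds hpos)
  set I := Set.Icc (a - δ / 2) (a + δ / 2)
  have hI : ∀ x ∈ I, x ∈ Metric.ball a δ := fun x hx => by
    rw [Metric.mem_ball, Real.dist_eq, abs_lt]
    constructor <;> linarith [hx.1, hx.2]
  have hconv : StrictConvexOn ℝ I g := by
    refine strictConvexOn_of_deriv2_pos' (convex_Icc _ _) hg.continuous.continuousOn fun x hx => ?_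
    rw [← iteratedDeriv_eq_iterate]
    exact (hball x (hI x hx)).2
  have hl : a - δ / 2 ∈ I := ⟨le_rfl, by linarith⟩
  have hr : a + δ / 2 ∈ I := ⟨by linarith, le_rfl⟩
  have hmid := hconv.2 hl hr (by linarith) (by norm_num : (0 : ℝ) < 1 / 2)
    (by norm_num : (0 : ℝ) < 1 / 2) (by norm_num)
  rw [show (1 / 2 : ℝ) • (a - δ / 2) + (1 / 2 : ℝ) • (a + δ / 2) = a by
    simp only [smul_eq_mul]; ring] at hmid
  simp only [smul_eq_mul] at hmid
  linarith [(hball _ (hI _ hl)).1, (hball _ (hI _ hr)).1]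

theorem iteratedFDeriv_two_apply_self_eq_iteratedDeriv {E F : Type*} [NormedAddCommGroup E]
    [NormedSpace ℝ E] [NormedAddCommGroup F] [NormedSpace ℝ F] {v : E → F} (hv : ContDiff ℝ 2 v)
    (x e : E) :
    iteratedFDeriv ℝ 2 v x ![e, e] = iteratedDeriv 2 (fun t : ℝ => v (x + t • e)) 0 := by
  have hcomp : (fun t : ℝ => v (x + t • e)) =
      (fun z => v (x + z)) ∘ ContinuousLinearMap.toSpanSingleton ℝ e := rfl
  have hvx : ContDiff ℝ 2 (fun z => v (x + z)) := hv.comp (contDiff_const.add contDiff_id)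
  rw [hcomp, iteratedDeriv_eq_iteratedFDeriv,
    ContinuousLinearMap.iteratedFDeriv_comp_right _ hvx _ le_rfl, iteratedFDeriv_comp_add_left]
  simp only [ContinuousMultilinearMap.compContinuousLinearMap_apply, map_zero, add_zero,
    ContinuousLinearMap.toSpanSingleton_apply, one_smul]
  congr 1
  ext i; fin_cases i <;> rfl

section Laplacian

variable {E : Type*} [NormedAddCommGroup E] [InnerProductSpace ℝ E] [FiniteDimensional ℝ E]

theorem laplacian_nonpos_of_isLocalMax {v : E → ℝ} {x : E} (hv : ContDiff ℝ 2 v)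
    (hmax : IsLocalMax v x) : Δ v x ≤ 0 := by
  rw [laplacian_eq_iteratedFDeriv_stdOrthonormalBasis]
  refine Finset.sum_nonpos fun i _ => ?_
  set e := stdOrthonormalBasis ℝ E i
  rw [iteratedFDeriv_two_apply_self_eq_iteratedDeriv hv]
  refine iteratedDeriv_two_nonpos_of_isLocalMax
    (hv.comp (contDiff_const.add (contDiff_id.smul contDiff_const))) ?_
  have hline : ContinuousAt (fun t : ℝ => x + t • e) 0 := by fun_prop
  exact IsLocalMax.comp_continuous (g := fun t : ℝ => x + t • e) (by simpa using hmax) hline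

theorem laplacian_comp_sub_left {ψ : E → ℝ} (hψ : ContDiff ℝ 2 ψ) (x y : E) :
    Δ (fun z => ψ (x - z)) y = Δ ψ (x - y) := by
  simp only [laplacian_eq_iteratedFDeriv_stdOrthonormalBasis]
  refine Finset.sum_congr rfl fun i _ => ?_
  have hψx : ContDiff ℝ 2 fun z => ψ (x - z) := hψ.comp (contDiff_const.sub contDiff_id)
  set e := stdOrthonormalBasis ℝ E i
  have hreflect : (fun t : ℝ => ψ (x - (y + t • e))) = fun t => ψ (x - y + (-t) • e) := by
    funext t; rw [neg_smul, sub_add_eq_sub_sub, sub_eq_add_neg _ (t • e)]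
  rw [iteratedFDeriv_two_apply_self_eq_iteratedDeriv hψ,
    iteratedFDeriv_two_apply_self_eq_iteratedDeriv hψx, hreflect,
    iteratedDeriv_comp_neg (f := fun t => ψ (x - y + t • e))]
  norm_num

theorem ContDiff.continuous_laplacian {ψ : E → ℝ} (hψ : ContDiff ℝ 2 ψ) : Continuous (Δ ψ) := by
  rw [laplacian_eq_iteratedFDeriv_stdOrthonormalBasis]
  exact continuous_finsetSum _ fun i _ => (hψ.continuous_iteratedFDeriv le_rfl).eval_const _

theorem HasCompactSupport.laplacian {ψ : E → ℝ} (hψ : HasCompactSupport ψ) :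
    HasCompactSupport (Δ ψ) := by
  rw [laplacian_eq_iteratedFDeriv_stdOrthonormalBasis]
  exact (hψ.iteratedFDeriv (𝕜 := ℝ) 2).comp_left
    (g := fun T : ContinuousMultilinearMap ℝ (fun _ : Fin 2 => E) ℝ =>
      ∑ i, T ![stdOrthonormalBasis ℝ E i, stdOrthonormalBasis ℝ E i]) (by simp)

theorem laplacian_norm_sq (x : E) : Δ (fun y : E => ‖y‖ ^ 2) x = 2 * Module.finrank ℝ E := by
  have hD2 (v w : E) : fderiv ℝ (fderiv ℝ fun y : E => ‖y‖ ^ 2) x v w = 2 * ⟪v, w⟫ := by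
    rw [fderiv_norm_sq, ← FunLike.coe_smul, ContinuousLinearMap.fderiv]
    rw [smul_apply, smul_apply, innerSL_apply_apply, two_nsmul, two_mul]
  rw [laplacian_eq_iteratedFDeriv_stdOrthonormalBasis]
  simp [iteratedFDeriv_two_apply, hD2, mul_comm]

theorem nonpos_of_le_laplacian {u : E → ℝ} (hu : ContDiff ℝ 2 u) (hbdd : BddAbove (Set.range u))
    (hle : ∀ x, u x ≤ Δ u x) (y : E) : u y ≤ 0 := by
  obtain ⟨M, hM⟩ := hbdd
  set N : ℝ := 2 * Module.finrank ℝ E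
  suffices key : ∀ ε > 0, u y ≤ ε * (‖y‖ ^ 2 + N) by
    have hlim : Tendsto (fun ε : ℝ => ε * (‖y‖ ^ 2 + N)) (𝓝[>] 0) (𝓝 0) :=
      ((continuous_mul_const _).tendsto' 0 0 (zero_mul _)).mono_left nhdsWithin_le_nhds
    exact ge_of_tendsto hlim (eventually_nhdsWithin_of_forall key)
  intro ε hε
  set v : E → ℝ := u - ε • fun x => ‖x‖ ^ 2
  have hsq : ContDiff ℝ 2 fun x : E => ‖x‖ ^ 2 := contDiff_norm_sq ℝ
  have hv : ContDiff ℝ 2 v := hu.sub (hsq.const_smul ε)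
  have hcoerc : Tendsto v (cocompact E) atBot := by
    have hsq_top : Tendsto (fun x : E => ‖x‖ ^ 2) (cocompact E) atTop :=
      (tendsto_pow_atTop two_ne_zero).comp tendsto_norm_cocompact_atTop
    refine tendsto_atBot_mono (fun x => ?_) <|
      tendsto_atBot_add_const_left _ M (tendsto_neg_atTop_atBot.comp (hsq_top.const_mul_atTop hε))
    simpa [v, sub_eq_add_neg, add_comm] using hM (Set.mem_range_self x)
  obtain ⟨x₀, hx₀⟩ := hv.continuous.exists_forall_ge hcoerc
  have hΔv : Δ v x₀ = Δ u x₀ - ε * N := by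
    have hεsq : ContDiffAt ℝ 2 (ε • fun x : E => ‖x‖ ^ 2) x₀ := (hsq.const_smul ε).contDiffAt
    rw [hu.contDiffAt.laplacian_sub hεsq,
      laplacian_smul ε hsq.contDiffAt, laplacian_norm_sq, smul_eq_mul]
  have hmax : Δ v x₀ ≤ 0 :=
    laplacian_nonpos_of_isLocalMax hv (IsMaxOn.isLocalMax (fun x _ => hx₀ x) univ_mem)
  -- `v y ≤ v x₀ ≤ u x₀ ≤ Δ u x₀ = Δ v x₀ + ε N ≤ ε N`
  have hvy := hx₀ y
  simp only [v, Pi.sub_apply, Pi.smul_apply, smul_eq_mul] at hvy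
  nlinarith [hle x₀, sq_nonneg ‖x₀‖]

theorem eq_zero_of_laplacian_eq_self {u : E → ℝ} (hu : ContDiff ℝ 2 u) {C : ℝ}
    (hC : ∀ x, |u x| ≤ C) (hΔ : ∀ x, Δ u x = u x) : u = 0 := by
  have hle := nonpos_of_le_laplacian hu ⟨C, by rintro _ ⟨x, rfl⟩; exact (abs_le.mp (hC x)).2⟩
    fun x => (hΔ x).ge
  have hge := nonpos_of_le_laplacian (u := -u) hu.neg
    ⟨C, by rintro _ ⟨x, rfl⟩; exact neg_le.mp (abs_le.mp (hC x)).1⟩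
    fun x => by rw [laplacian_neg, Pi.neg_apply, Pi.neg_apply, hΔ x]
  funext x
  exact le_antisymm (hle x) (by simpa using hge x)

end Laplacian

section Convolution

theorem iteratedFDeriv_two_convolution_right_apply {G E₁ E₂ F : Type*} [NormedAddCommGroup G]
    [NormedSpace ℝ G] [MeasurableSpace G] [BorelSpace G] [NormedAddCommGroup E₁]
    [NormedSpace ℝ E₁] [NormedAddCommGroup E₂] [NormedSpace ℝ E₂] [NormedAddCommGroup F]
    [NormedSpace ℝ F] {μ : Measure G} [SFinite μ] [μ.IsAddLeftInvariant]
    (L : E₁ →L[ℝ] E₂ →L[ℝ] F) {f : G → E₁} {g : G → E₂} (hcg : HasCompactSupport g)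
    (hf : LocallyIntegrable f μ) (hg : ContDiff ℝ 2 g) (x v w : G) :
    iteratedFDeriv ℝ 2 (f ⋆[L, μ] g) x ![v, w] =
      (f ⋆[L, μ] fun y => iteratedFDeriv ℝ 2 g y ![v, w]) x := by
  have hg' : ContDiff ℝ 1 (fderiv ℝ g) := hg.fderiv_right (by norm_num)
  have hD1 : fderiv ℝ (f ⋆[L, μ] g) = f ⋆[L.precompR G, μ] fderiv ℝ g := funext fun y =>
    (hcg.hasFDerivAt_convolution_right L hf (hg.of_le one_le_two) y).fderiv
  have hD2 := funext fun y =>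
    ((hcg.fderiv ℝ).hasFDerivAt_convolution_right (L.precompR G) hf hg' y (μ := μ)).fderiv
  have hcg'' : HasCompactSupport (fderiv ℝ (fderiv ℝ g)) := (hcg.fderiv ℝ).fderiv ℝ
  have hg'' : Continuous (fderiv ℝ (fderiv ℝ g)) := hg'.continuous_fderiv one_ne_zero
  have hcgv : HasCompactSupport fun y => fderiv ℝ (fderiv ℝ g) y v :=
    hcg''.comp_left (g := fun T : G →L[ℝ] G →L[ℝ] E₂ => T v) (zero_apply v)
  have hgv : Continuous fun y => fderiv ℝ (fderiv ℝ g) y v :=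
    (ContinuousLinearMap.apply ℝ _ v).continuous.comp hg''
  simp only [iteratedFDeriv_two_apply, hD1, hD2, Matrix.cons_val_zero, Matrix.cons_val_one]
  rw [convolution_precompR_apply _ hf hcg'' hg'' x v, convolution_precompR_apply _ hf hcgv hgv x w]

theorem abs_convolution_mul_le {G : Type*} [AddGroup G] [MeasurableSpace G] [MeasurableAdd G]
    [MeasurableNeg G] {μ : Measure G} [μ.IsAddLeftInvariant] [μ.IsNegInvariant] {p q : ℝ}
    (hpq : p.HolderConjugate q) {f g : G → ℝ} (hf : MemLp f (.ofReal p) μ)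
    (hg : MemLp g (.ofReal q) μ) (x : G) :
    |(f ⋆[.mul ℝ ℝ, μ] g) x| ≤
      (∫ t, ‖f t‖ ^ p ∂μ) ^ (1 / p) * (∫ t, ‖g t‖ ^ q ∂μ) ^ (1 / q) := by
  have hgx : MemLp (fun t => g (x - t)) (.ofReal q) μ :=
    hg.comp_measurePreserving (Measure.measurePreserving_sub_left μ x)
  calc |(f ⋆[.mul ℝ ℝ, μ] g) x| ≤ ∫ t, ‖f t‖ * ‖g (x - t)‖ ∂μ := by
        simpa [convolution_def] using
          norm_integral_le_integral_norm (μ := μ) fun t => f t * g (x - t)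
    _ ≤ (∫ t, ‖f t‖ ^ p ∂μ) ^ (1 / p) * (∫ t, ‖g (x - t)‖ ^ q ∂μ) ^ (1 / q) :=
        integral_mul_norm_le_Lp_mul_Lq hpq hf hgx
    _ = (∫ t, ‖f t‖ ^ p ∂μ) ^ (1 / p) * (∫ t, ‖g t‖ ^ q ∂μ) ^ (1 / q) := by
        rw [integral_sub_left_eq_self (fun t => ‖g t‖ ^ q) μ x]

variable {E : Type*} [NormedAddCommGroup E] [InnerProductSpace ℝ E] [FiniteDimensional ℝ E]
  [MeasurableSpace E] [BorelSpace E] {μ : Measure E}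

theorem laplacian_convolution_mul_right [SFinite μ] [μ.IsAddLeftInvariant] {f ρ : E → ℝ}
    (hf : LocallyIntegrable f μ) (hρ : ContDiff ℝ 2 ρ) (hcρ : HasCompactSupport ρ) (x : E) :
    Δ (f ⋆[.mul ℝ ℝ, μ] ρ) x = (f ⋆[.mul ℝ ℝ, μ] Δ ρ) x := by
  set e := stdOrthonormalBasis ℝ E
  have hexists (i) :
      ConvolutionExistsAt f (fun y => iteratedFDeriv ℝ 2 ρ y ![e i, e i]) x (.mul ℝ ℝ) μ := by
    refine HasCompactSupport.convolutionExists_right _ ?_ hf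
      ((hρ.continuous_iteratedFDeriv le_rfl).eval_const _) x
    exact (hcρ.iteratedFDeriv (𝕜 := ℝ) 2).comp_left
      (g := fun T : ContinuousMultilinearMap ℝ (fun _ : Fin 2 => E) ℝ => T ![e i, e i]) rfl
  simp only [laplacian_eq_iteratedFDeriv_stdOrthonormalBasis,
    iteratedFDeriv_two_convolution_right_apply _ hcρ hf hρ, convolution_def, map_sum]
  exact (integral_finsetSum _ fun i _ => hexists i).symm

variable [μ.IsAddHaarMeasure] {f : E → ℝ} {r : ℝ}

theorem laplacian_convolution_mul_eq_self
    (hann : ∀ ψ : E → ℝ, ContDiff ℝ ∞ ψ → HasCompactSupport ψ → ∫ x, f x * (ψ x - Δ ψ x) ∂μ = 0)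
    (hf : LocallyIntegrable f μ) {ρ : E → ℝ} (hρ : ContDiff ℝ ∞ ρ) (hcρ : HasCompactSupport ρ)
    (x : E) : Δ (f ⋆[.mul ℝ ℝ, μ] ρ) x = (f ⋆[.mul ℝ ℝ, μ] ρ) x := by
  have hρ2 : ContDiff ℝ 2 ρ := hρ.of_le ENat.LEInfty.out
  have hint : Integrable (fun y => f y * ρ (x - y)) μ :=
    hcρ.convolutionExists_right (.mul ℝ ℝ) hf hρ.continuous x
  have hintΔ : Integrable (fun y => f y * Δ ρ (x - y)) μ :=
    hcρ.laplacian.convolutionExists_right (.mul ℝ ℝ) hf hρ2.continuous_laplacian x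
  have h0 := hann (fun y => ρ (x - y)) (hρ.comp (contDiff_const.sub contDiff_id))
    (hcρ.comp_homeomorph (Homeomorph.subLeft x))
  simp only [laplacian_comp_sub_left hρ2 x, mul_sub] at h0
  rw [integral_sub hint hintΔ, sub_eq_zero] at h0
  rw [laplacian_convolution_mul_right hf hρ2 hcρ x, convolution_def, convolution_def]
  exact h0.symm

theorem convolution_mul_eq_zero_of_forall_integral_mul_sub_laplacian_eq_zero (hr : 1 < r)
    (hf : MemLp f (.ofReal r) μ)
    (hann : ∀ ψ : E → ℝ, ContDiff ℝ ∞ ψ → HasCompactSupport ψ → ∫ x, f x * (ψ x - Δ ψ x) ∂μ = 0)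
    {ρ : E → ℝ} (hρ : ContDiff ℝ ∞ ρ) (hcρ : HasCompactSupport ρ) : f ⋆[.mul ℝ ℝ, μ] ρ = 0 := by
  have hfl : LocallyIntegrable f μ := hf.locallyIntegrable (ENNReal.one_le_ofReal.mpr hr.le)
  have hρLq : MemLp ρ (.ofReal r.conjExponent) μ := hρ.continuous.memLp_of_hasCompactSupport hcρ
  exact eq_zero_of_laplacian_eq_self
    (hcρ.contDiff_convolution_right _ hfl (hρ.of_le ENat.LEInfty.out))
    (abs_convolution_mul_le (.conjExponent hr) hf hρLq)
    (laplacian_convolution_mul_eq_self hann hfl hρ hcρ)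

theorem ae_eq_zero_of_forall_integral_mul_sub_laplacian_eq_zero (hr : 1 < r)
    (hf : MemLp f (.ofReal r) μ)
    (hann : ∀ ψ : E → ℝ, ContDiff ℝ ∞ ψ → HasCompactSupport ψ → ∫ x, f x * (ψ x - Δ ψ x) ∂μ = 0) :
    f =ᵐ[μ] 0 := by
  refine ae_eq_zero_of_integral_contDiff_smul_eq_zero
    (hf.locallyIntegrable (ENNReal.one_le_ofReal.mpr hr.le)) fun g hg hcg => ?_
  have h0 := congrFun (convolution_mul_eq_zero_of_forall_integral_mul_sub_laplacian_eq_zero hr hf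
    hann (hg.comp contDiff_neg) (hcg.comp_homeomorph (Homeomorph.neg E))) 0
  simpa [convolution_def, mul_comm] using h0

end Convolution

theorem stmt0_general (n : ℕ) (r : ℝ) (hr : 1 < r)
    (f : EuclideanSpace ℝ (Fin n) → ℝ)
    (hf : MemLp f (ENNReal.ofReal r) volume)
    (hann : ∀ ψ : EuclideanSpace ℝ (Fin n) → ℝ,
      ContDiff ℝ (⊤ : ℕ∞) ψ → HasCompactSupport ψ →
      ∫ x, f x * (ψ x - euclideanLaplacian ψ x) = 0) :
    f =ᵐ[volume] 0 :=
  ae_eq_zero_of_forall_integral_mul_sub_laplacian_eq_zero hr hf fun ψ hψ hcψ => by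
    simpa [euclideanLaplacian_eq_laplacian] using hann ψ hψ hcψ

/-- If `f ∈ L^r(ℝⁿ)` annihilates `{ψ - Δψ : ψ ∈ C_c^∞}`, then `f = 0` a.e. -/
theorem stmt0 (n : ℕ) (hn : 1 ≤ n) (r : ℝ) (hr : 1 < r)
    (f : EuclideanSpace ℝ (Fin n) → ℝ)
    (hf : MemLp f (ENNReal.ofReal r) volume)
    (hann : ∀ ψ : EuclideanSpace ℝ (Fin n) → ℝ,
      ContDiff ℝ (⊤ : ℕ∞) ψ → HasCompactSupport ψ →
      ∫ x, f x * (ψ x - euclideanLaplacian ψ x) = 0) :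
    f =ᵐ[volume] 0 :=
  stmt0_general n r hr f hf hann
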